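/- Let b > 0 and λ₀ > −b/8 with λ₀ ≠ 0, and v(τ) = −√(2b)·tanh(√(2b)·τ/2). Then there is no nontrivial solution (y,x) : ℝ → ℝ² of y' = −(v/4)y + λ₀x, x' = y + (v/4)x which is bounded on all of ℝ and tends to (0,0) as τ → ±∞. (Equivalently, the stable and unstable subspaces of this system at τ = 0 intersect trivially.) -/

import Mathlib

/-!
Put `f := λ₀ + b/4 − v²/16`. Since `v' = v²/2 − b`, the component `y` and its derivative
`z = −(v/4)y + λ₀x` satisfy `z' = f y`, and `f > λ₀ + b/8 > 0` because `v² < 2b`. Then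
`(y z)' = z² + f y² ≥ 0`, so `y z` is monotone; it tends to `0` at both ends, hence vanishes
identically, which forces `y = z = 0`, and finally `λ₀ x = z + (v/4) y = 0`.
-/

open Real Filter Topology

theorem Real.hasDerivAt_tanh (x : ℝ) : HasDerivAt tanh (1 - tanh x ^ 2) x := by
  have hcosh := (cosh_pos x).ne'
  have h := (hasDerivAt_sinh x).div (hasDerivAt_cosh x) hcosh
  rw [show sinh / cosh = tanh from funext fun t => (tanh_eq_sinh_div_cosh t).symm] at h
  refine h.congr_deriv ?_
  rw [tanh_eq_sinh_div_cosh]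
  field_simp

theorem hasDerivAt_neg_mul_tanh_half (c τ : ℝ) :
    HasDerivAt (fun t => -c * tanh (c * t / 2))
      ((-c * tanh (c * τ / 2)) ^ 2 / 2 - c ^ 2 / 2) τ := by
  have hinner : HasDerivAt (fun t => c * t / 2) (c / 2) τ := by
    simpa using ((hasDerivAt_id τ).const_mul c).div_const 2
  exact (((hasDerivAt_tanh _).comp τ hinner).const_mul (-c)).congr_deriv (by ring)

theorem Monotone.eq_of_tendsto_atTop_of_tendsto_atBot {p : ℝ → ℝ} {a : ℝ} (hp : Monotone p)
    (htop : Tendsto p atTop (𝓝 a)) (hbot : Tendsto p atBot (𝓝 a)) (τ : ℝ) : p τ = a :=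
  le_antisymm (hp.ge_of_tendsto htop τ) (hp.le_of_tendsto hbot τ)

theorem eq_zero_of_hasDerivAt_of_pos_of_tendsto {f y z : ℝ → ℝ}
    (hy : ∀ τ, HasDerivAt y (z τ) τ) (hz : ∀ τ, HasDerivAt z (f τ * y τ) τ)
    (hf : ∀ τ, 0 < f τ) (htop : Tendsto (fun τ => y τ * z τ) atTop (𝓝 0))
    (hbot : Tendsto (fun τ => y τ * z τ) atBot (𝓝 0)) (τ : ℝ) :
    y τ = 0 ∧ z τ = 0 := by
  have hp : ∀ t, HasDerivAt (fun t => y t * z t) (z t ^ 2 + f t * y t ^ 2) t :=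
    fun t => ((hy t).mul (hz t)).congr_deriv (by ring)
  have hmono : Monotone fun t => y t * z t :=
    monotone_of_deriv_nonneg (fun t => (hp t).differentiableAt) fun t => by
      rw [(hp t).deriv]
      nlinarith [sq_nonneg (z t), sq_nonneg (y t), hf t]
  have hzero : (fun t => y t * z t) = fun _ => 0 :=
    funext (hmono.eq_of_tendsto_atTop_of_tendsto_atBot htop hbot)
  have hsum : z τ ^ 2 + f τ * y τ ^ 2 = 0 :=
    (hp τ).unique (hzero ▸ hasDerivAt_const τ 0)
  have hy0 : y τ = 0 := by
    by_contra h
    nlinarith [sq_nonneg (z τ), mul_pos (hf τ) (sq_pos_of_ne_zero h)]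
  exact ⟨hy0, by simpa [hy0] using hsum⟩

theorem hasDerivAt_rhs_of_riccati {b lam : ℝ} {v y x : ℝ → ℝ}
    (hv : ∀ τ, HasDerivAt v (v τ ^ 2 / 2 - b) τ)
    (hy : ∀ τ, HasDerivAt y (-(v τ / 4) * y τ + lam * x τ) τ)
    (hx : ∀ τ, HasDerivAt x (y τ + (v τ / 4) * x τ) τ) (τ : ℝ) :
    HasDerivAt (fun t => -(v t / 4) * y t + lam * x t)
      ((lam + b / 4 - v τ ^ 2 / 16) * y τ) τ :=
  (((hv τ).div_const 4).neg.mul (hy τ)).add ((hx τ).const_mul lam) |>.congr_deriv <| by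
    simp only [Pi.neg_apply]
    ring

theorem stmt16_general (b lam : ℝ) (hb : 0 < b) (hlam : lam > -b / 8) (hne : lam ≠ 0)
    (v y x : ℝ → ℝ)
    (hv : v = fun τ => -Real.sqrt (2 * b) * Real.tanh (Real.sqrt (2 * b) * τ / 2))
    (hy : ∀ τ, HasDerivAt y (-(v τ / 4) * y τ + lam * x τ) τ)
    (hx : ∀ τ, HasDerivAt x (y τ + (v τ / 4) * x τ) τ)
    (hlimTop : Filter.Tendsto (fun τ => (y τ, x τ)) Filter.atTop (nhds (0, 0)))
    (hlimBot : Filter.Tendsto (fun τ => (y τ, x τ)) Filter.atBot (nhds (0, 0))) :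
    ∀ τ, y τ = 0 ∧ x τ = 0 := by
  have hc : √(2 * b) ^ 2 = 2 * b := sq_sqrt (by positivity)
  have hv' : ∀ τ, HasDerivAt v (v τ ^ 2 / 2 - b) τ := fun τ => by
    subst hv
    exact (hasDerivAt_neg_mul_tanh_half √(2 * b) τ).congr_deriv (by rw [hc]; ring)
  have hvsq : ∀ τ, v τ ^ 2 < 2 * b := fun τ => by
    rw [hv, mul_pow, neg_sq, hc]
    nlinarith [tanh_sq_lt_one (√(2 * b) * τ / 2)]
  have hvb : ∀ l, IsBoundedUnder (· ≤ ·) l (norm ∘ fun τ => -(v τ / 4)) := fun l =>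
    isBoundedUnder_of ⟨√(2 * b) / 4, fun τ => by
      simpa [abs_div] using div_le_div_of_nonneg_right (abs_le_sqrt (hvsq τ).le) zero_le_four⟩
  have hlim : ∀ l, Tendsto (fun τ => (y τ, x τ)) l (𝓝 (0, 0)) →
      Tendsto (fun τ => y τ * (-(v τ / 4) * y τ + lam * x τ)) l (𝓝 0) := fun l h => by
    have hz := (isBoundedUnder_le_mul_tendsto_zero (hvb l) h.fst_nhds).add
      (h.snd_nhds.const_mul lam)
    simpa using h.fst_nhds.mul hz
  intro τ
  obtain ⟨hy0, hz0⟩ := eq_zero_of_hasDerivAt_of_pos_of_tendsto hy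
    (hasDerivAt_rhs_of_riccati hv' hy hx) (fun t => by linarith [hvsq t])
    (hlim _ hlimTop) (hlim _ hlimBot) τ
  rw [hy0, mul_zero, zero_add] at hz0
  exact ⟨hy0, (mul_eq_zero.mp hz0).resolve_left hne⟩

/-- For `λ₀ > −b/8`, `λ₀ ≠ 0`, there is no nontrivial bounded solution of
`y' = −(v/4)y + λ₀x`, `x' = y + (v/4)x` tending to `(0,0)` at `±∞`: any such solution
vanishes identically. -/
theorem stmt16 (b lam : ℝ) (hb : 0 < b) (hlam : lam > -b / 8) (hne : lam ≠ 0)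
    (v y x : ℝ → ℝ)
    (hv : v = fun τ => -Real.sqrt (2 * b) * Real.tanh (Real.sqrt (2 * b) * τ / 2))
    (hy : ∀ τ, HasDerivAt y (-(v τ / 4) * y τ + lam * x τ) τ)
    (hx : ∀ τ, HasDerivAt x (y τ + (v τ / 4) * x τ) τ)
    (hbdd : ∃ C : ℝ, ∀ τ, |y τ| + |x τ| ≤ C)
    (hlimTop : Filter.Tendsto (fun τ => (y τ, x τ)) Filter.atTop (nhds (0, 0)))
    (hlimBot : Filter.Tendsto (fun τ => (y τ, x τ)) Filter.atBot (nhds (0, 0))) :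
    ∀ τ, y τ = 0 ∧ x τ = 0 :=
  stmt16_general b lam hb hlam hne v y x hv hy hx hlimTop hlimBot
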